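/- Let G be a symmetric n×n integer matrix with det G ≠ 0, and suppose that some diagonal entry of G is odd (equivalently, xᵀGx is odd for some x ∈ ℤⁿ, i.e. the lattice is odd). Then there exist a matrix M ∈ Mₙ(ℤ) with odd determinant, a natural number n₂ with 0 ≤ n₂ ≤ n, a diagonal n₂×n₂ integer matrix G₁ all of whose diagonal entries are odd, and a symmetric (n−n₂)×(n−n₂) integer matrix G₂, such that MᵀGM is the block diagonal matrix with diagonal blocks G₁ and 2·G₂. -/

import Mathlib

/-!
Work up to congruences `A ↦ Mᵀ * A * M` with `det M` odd and induct on the rank. An odd diagonal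
entry `g` splits off by the basis change `e k ↦ g • e k - A₀ₖ • e₀`, of determinant a power of `g`,
which leaves `g • (g • D - q * qᵀ)` on the complement. The induction goes on as long as the
complement has an odd diagonal entry or is even. Otherwise it is, modulo `2`, a nonzero
alternating form, with some odd entry `(k, l)`; then the pivot `e₀ + e k` is still odd, and the
complement it leaves has an odd entry at `(l, l)`.
-/

open Matrix

namespace Matrix

section Schur

variable {κ α R : Type*} [Fintype κ] [DecidableEq κ] [Fintype α] [DecidableEq α] [CommRing R]

/-- The witness replaces each basis vector `e k` of the first block by
`det P • e k - ∑ a, (adjugate P * Qᵀ) a k • f a`, which clears `Q` without dividing by `det P`. -/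
theorem exists_transpose_mul_fromBlocks_mul_eq_schur (D : Matrix κ κ R) (Q : Matrix κ α R)
    {P : Matrix α α R} (hP : P.IsSymm) :
    ∃ N : Matrix (κ ⊕ α) (κ ⊕ α) R, N.det = P.det ^ Fintype.card κ ∧
      Nᵀ * fromBlocks D Q Qᵀ P * N =
        fromBlocks (P.det • (P.det • D - Q * adjugate P * Qᵀ)) 0 0 P := by
  refine ⟨fromBlocks (P.det • 1) 0 (-(adjugate P * Qᵀ)) 1, by simp, ?_⟩
  have hadj : (adjugate P)ᵀ = adjugate P := by rw [adjugate_transpose, hP.eq]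
  have hQP : Q * adjugate P * P = P.det • Q := by
    rw [Matrix.mul_assoc, adjugate_mul, Matrix.mul_smul, Matrix.mul_one]
  have hPQ : P * (adjugate P * Qᵀ) = P.det • Qᵀ := by
    rw [← Matrix.mul_assoc, mul_adjugate, Matrix.smul_mul, Matrix.one_mul]
  simp only [fromBlocks_transpose, fromBlocks_multiply, transpose_neg, transpose_mul,
    transpose_transpose, transpose_smul, transpose_one, transpose_zero, hadj]
  simp [hQP, hPQ, sub_eq_add_neg]

theorem transpose_mul_fromBlocks_mul_shear (S : Matrix κ κ R) (P : Matrix α α R)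
    (E : Matrix κ α R) :
    (fromBlocks 1 E 0 1)ᵀ * fromBlocks S 0 0 P * fromBlocks 1 E 0 1 =
      fromBlocks S (S * E) (Eᵀ * S) (Eᵀ * S * E + P) := by
  simp [fromBlocks_transpose, fromBlocks_multiply]

end Schur

theorem isSymm_of_subsingleton {ι R : Type*} [Subsingleton ι] (A : Matrix ι ι R) : A.IsSymm :=
  .ext fun i j => by rw [Subsingleton.elim i j]

theorem IsSymm.transpose_mul_mul {ι R : Type*} [Fintype ι] [CommSemiring R]
    {A : Matrix ι ι R} (hA : A.IsSymm) (M : Matrix ι ι R) : (Mᵀ * A * M).IsSymm := by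
  simp [IsSymm, transpose_mul, hA.eq, Matrix.mul_assoc]

theorem IsSymm.smul_smul_sub_mul_transpose {κ α R : Type*} [Fintype α] [CommRing R]
    {D : Matrix κ κ R} (hD : D.IsSymm) (c : R) (Q : Matrix κ α R) :
    (c • (c • D - Q * Qᵀ)).IsSymm :=
  ((hD.smul c).sub (by simp [IsSymm, transpose_mul])).smul c

variable {ι κ : Type*}

/-- Up to reordering the indices, `C` is `diag(G₁) ⊕ 2 • G₂` with `G₁` odd, indexed by `p`. -/
def IsOddSplit (C : Matrix ι ι ℤ) (p : ι → Prop) : Prop :=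
  (∀ i, p i → Odd (C i i)) ∧ (∀ i j, i ≠ j → p i ∨ p j → C i j = 0) ∧
    ∀ i j, ¬ p i → ¬ p j → 2 ∣ C i j

theorem IsOddSplit.submatrix {C : Matrix ι ι ℤ} {p : ι → Prop} (h : C.IsOddSplit p)
    (e : κ ≃ ι) : (C.submatrix e e).IsOddSplit (p ∘ e) :=
  ⟨fun _ hi => h.1 _ hi, fun _ _ hij => h.2.1 _ _ (e.injective.ne hij),
    fun _ _ => h.2.2 _ _⟩

theorem IsOddSplit.fromBlocks {C₁ : Matrix ι ι ℤ} {C₂ : Matrix κ κ ℤ} {p₁ : ι → Prop}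
    {p₂ : κ → Prop} (h₁ : C₁.IsOddSplit p₁) (h₂ : C₂.IsOddSplit p₂) :
    (fromBlocks C₁ 0 0 C₂).IsOddSplit (Sum.elim p₁ p₂) := by
  refine ⟨?_, ?_, ?_⟩
  · rintro (i | i) hi
    exacts [h₁.1 i hi, h₂.1 i hi]
  · rintro (i | i) (j | j) hij hp
    · exact h₁.2.1 i j (by simpa using hij) hp
    · rfl
    · rfl
    · exact h₂.2.1 i j (by simpa using hij) hp
  · rintro (i | i) (j | j) hi hj
    · exact h₁.2.2 i j hi hj
    · exact dvd_zero 2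
    · exact dvd_zero 2
    · exact h₂.2.2 i j hi hj

variable [Fintype ι] [DecidableEq ι] [Fintype κ] [DecidableEq κ]

def HasOddSplitting (A : Matrix ι ι ℤ) : Prop :=
  ∃ M : Matrix ι ι ℤ, Odd M.det ∧ ∃ p, (Mᵀ * A * M).IsOddSplit p

theorem IsOddSplit.hasOddSplitting {A : Matrix ι ι ℤ} {p : ι → Prop} (h : A.IsOddSplit p) :
    A.HasOddSplitting :=
  ⟨1, by simp, p, by simpa using h⟩

theorem hasOddSplitting_of_forall_two_dvd {A : Matrix ι ι ℤ} (h : ∀ i j, 2 ∣ A i j) :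
    A.HasOddSplitting :=
  IsOddSplit.hasOddSplitting (p := fun _ => False)
    ⟨fun _ => False.elim, fun _ _ _ hp => by simp at hp, fun i j _ _ => h i j⟩

theorem HasOddSplitting.of_transpose_mul_mul {A N : Matrix ι ι ℤ} (hN : Odd N.det)
    (h : (Nᵀ * A * N).HasOddSplitting) : A.HasOddSplitting := by
  obtain ⟨M, hM, p, hp⟩ := h
  refine ⟨N * M, by simpa [det_mul] using hN.mul hM, p, ?_⟩
  simpa [transpose_mul, Matrix.mul_assoc] using hp

theorem HasOddSplitting.of_submatrix {A : Matrix ι ι ℤ} (e : κ ≃ ι)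
    (h : (A.submatrix e e).HasOddSplitting) : A.HasOddSplitting := by
  obtain ⟨M, hM, p, hp⟩ := h
  refine ⟨M.submatrix e.symm e.symm, by rwa [det_submatrix_equiv_self], p ∘ e.symm, ?_⟩
  convert hp.submatrix e.symm using 1
  rw [← submatrix_mul_equiv _ _ _ e.symm, ← submatrix_mul_equiv _ _ _ e.symm,
    submatrix_submatrix, e.self_comp_symm, submatrix_id_id, transpose_submatrix]

theorem HasOddSplitting.fromBlocks {A : Matrix ι ι ℤ} {B : Matrix κ κ ℤ}
    (hA : A.HasOddSplitting) (hB : B.HasOddSplitting) :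
    (fromBlocks A 0 0 B).HasOddSplitting := by
  obtain ⟨M₁, hM₁, p₁, hp₁⟩ := hA
  obtain ⟨M₂, hM₂, p₂, hp₂⟩ := hB
  refine ⟨Matrix.fromBlocks M₁ 0 0 M₂, by simpa using hM₁.mul hM₂, Sum.elim p₁ p₂, ?_⟩
  simpa [fromBlocks_transpose, fromBlocks_multiply] using hp₁.fromBlocks hp₂

theorem HasOddSplitting.of_schur {α : Type*} [Fintype α] [DecidableEq α] {D : Matrix κ κ ℤ}
    {Q : Matrix κ α ℤ} {P : Matrix α α ℤ} (hP : P.IsSymm) (hdet : Odd P.det)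
    (hPs : P.HasOddSplitting) (hS : (P.det • (P.det • D - Q * adjugate P * Qᵀ)).HasOddSplitting) :
    (Matrix.fromBlocks D Q Qᵀ P).HasOddSplitting := by
  obtain ⟨N, hN, hNA⟩ := exists_transpose_mul_fromBlocks_mul_eq_schur D Q hP
  exact .of_transpose_mul_mul (hN ▸ hdet.pow) (hNA ▸ hS.fromBlocks hPs)

theorem HasOddSplitting.of_schur_fin_one {D : Matrix κ κ ℤ} {q : Matrix κ (Fin 1) ℤ}
    {P : Matrix (Fin 1) (Fin 1) ℤ} (hP : Odd (P 0 0))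
    (hS : (P 0 0 • (P 0 0 • D - q * qᵀ)).HasOddSplitting) :
    (Matrix.fromBlocks D q qᵀ P).HasOddSplitting := by
  have hPs : P.IsOddSplit fun _ => True :=
    ⟨fun i _ => Subsingleton.elim i 0 ▸ hP, fun i j hij => (hij (Subsingleton.elim i j)).elim,
      fun _ _ h => (h trivial).elim⟩
  refine .of_schur (isSymm_of_subsingleton P) (by rwa [det_fin_one])
    hPs.hasOddSplitting ?_
  simpa using hS

theorem hasOddSplitting_fromBlocks_fin_one
    (ih : ∀ S : Matrix κ κ ℤ, S.IsSymm → ((∃ i, Odd (S i i)) ∨ ∀ i j, 2 ∣ S i j) →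
      S.HasOddSplitting)
    {D : Matrix κ κ ℤ} (hD : D.IsSymm) (q : Matrix κ (Fin 1) ℤ) {P : Matrix (Fin 1) (Fin 1) ℤ}
    (hP : Odd (P 0 0)) : (fromBlocks D q qᵀ P).HasOddSplitting := by
  set S := P 0 0 • (P 0 0 • D - q * qᵀ) with hS_def
  have hS : S.IsSymm := hD.smul_smul_sub_mul_transpose _ q
  by_cases hgood : (∃ i, Odd (S i i)) ∨ ∀ i j, 2 ∣ S i j
  · exact .of_schur_fin_one hP (ih S hS hgood)
  push Not at hgood
  obtain ⟨hdiag, k, l, hkl⟩ := hgood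
  obtain ⟨N, hN, hNA⟩ := exists_transpose_mul_fromBlocks_mul_eq_schur D q
    (isSymm_of_subsingleton P)
  simp only [det_fin_one, adjugate_fin_one, Matrix.mul_one, ← hS_def] at hN hNA
  refine .of_transpose_mul_mul (hN ▸ hP.pow) (hNA ▸ ?_)
  clear_value S
  set E : Matrix κ (Fin 1) ℤ := single k 0 1
  refine .of_transpose_mul_mul (N := Matrix.fromBlocks 1 E 0 1) (by simp) ?_
  have hES : Eᵀ * S = (S * E)ᵀ := by rw [transpose_mul, hS.eq]
  rw [transpose_mul_fromBlocks_mul_shear, hES]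
  have hg : Odd (((S * E)ᵀ * E + P) 0 0) := by
    simpa [E] using (Int.not_odd_iff_even.mp (hdiag k)).add_odd hP
  refine .of_schur_fin_one hg (ih _ (hS.smul_smul_sub_mul_transpose _ _) (Or.inl ⟨l, ?_⟩))
  have hlk : Odd (S l k) := by rw [hS.apply]; exact Int.not_even_iff_odd.mp fun h => hkl h.two_dvd
  have hSE : (S * E * (S * E)ᵀ) l l = S l k * S l k := by simp [E, mul_apply, single_apply]
  simp only [smul_apply, sub_apply, smul_eq_mul, hSE]
  exact hg.mul (((Int.not_odd_iff_even.mp (hdiag l)).mul_left _).sub_odd (hlk.mul hlk))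

theorem hasOddSplitting_of_isSymm {n : ℕ} {A : Matrix (Fin n) (Fin n) ℤ} (hA : A.IsSymm)
    (h : (∃ i, Odd (A i i)) ∨ ∀ i j, 2 ∣ A i j) : A.HasOddSplitting := by
  induction n with
  | zero => exact hasOddSplitting_of_forall_two_dvd fun i => i.elim0
  | succ n ih =>
    obtain ⟨i, hi⟩ | heven := h
    · let e : Fin n ⊕ Fin 1 ≃ Fin (n + 1) :=
        finSumFinEquiv.trans (Equiv.swap (finSumFinEquiv (.inr 0)) i)
      refine .of_submatrix e ?_
      have hB := hA.submatrix e
      rw [← fromBlocks_toBlocks (A.submatrix e e), isSymm_fromBlocks_iff] at hB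
      rw [← fromBlocks_toBlocks (A.submatrix e e), ← hB.2.1]
      exact hasOddSplitting_fromBlocks_fin_one (fun _ hS hS' => ih hS hS') hB.1 _
        (by simpa [e, toBlocks₂₂] using hi)
    · exact hasOddSplitting_of_forall_two_dvd heven

theorem IsOddSplit.exists_eq_submatrix_fromBlocks {n : ℕ} {C : Matrix (Fin n) (Fin n) ℤ}
    (hC : C.IsSymm) {p : Fin n → Prop} (h : C.IsOddSplit p) :
    ∃ (n₂ : ℕ) (_ : n₂ ≤ n) (d₁ : Fin n₂ → ℤ) (G₂ : Matrix (Fin (n - n₂)) (Fin (n - n₂)) ℤ)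
      (e : Fin n ≃ (Fin n₂ ⊕ Fin (n - n₂))), (∀ i, Odd (d₁ i)) ∧ G₂.IsSymm ∧
        C = (Matrix.fromBlocks (diagonal d₁) 0 0 ((2 : ℤ) • G₂)).submatrix e e := by
  classical
  let e₁ := Fintype.equivFin {i // p i}
  let e₂ : {i // ¬p i} ≃ Fin (n - Fintype.card {i // p i}) :=
    Fintype.equivFinOfCardEq (by rw [Fintype.card_subtype_compl, Fintype.card_fin])
  let f := (e₁.sumCongr e₂).symm.trans (Equiv.sumCompl p)
  have hf₁ : ∀ a, p (f (.inl a)) := fun a => (e₁.symm a).2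
  have hf₂ : ∀ b, ¬p (f (.inr b)) := fun b => (e₂.symm b).2
  let d₁ a := C (f (.inl a)) (f (.inl a))
  let G₂ : Matrix _ _ ℤ := of fun a b => C (f (.inr a)) (f (.inr b)) / 2
  have hf : C.submatrix f f = Matrix.fromBlocks (diagonal d₁) 0 0 ((2 : ℤ) • G₂) := by
    ext (a | a) (b | b)
    · by_cases hab : a = b
      · simp [hab, d₁]
      · simpa [hab] using h.2.1 _ _ (f.injective.ne (by simpa using hab)) (.inl (hf₁ a))
    · simpa using h.2.1 _ _ (f.injective.ne Sum.inl_ne_inr) (.inl (hf₁ a))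
    · simpa using h.2.1 _ _ (f.injective.ne Sum.inr_ne_inl) (.inr (hf₁ b))
    · simpa [G₂] using (Int.mul_ediv_cancel' (h.2.2 _ _ (hf₂ a) (hf₂ b))).symm
  refine ⟨_, (Fintype.card_subtype_le p).trans_eq (Fintype.card_fin n), d₁, G₂, f.symm,
    fun a => h.1 _ (hf₁ a), .ext fun a b => by simp only [G₂, of_apply, hC.apply], ?_⟩
  rw [← hf, submatrix_submatrix, f.self_comp_symm, submatrix_id_id]

end Matrix

theorem exists_odd_index_sublattice_splitting_of_odd_lattice_general
    {n : ℕ} (G : Matrix (Fin n) (Fin n) ℤ) (hG : G.IsSymm)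
    (hodd : ∃ i, Odd (G i i)) :
    ∃ (n₂ : ℕ) (_ : n₂ ≤ n) (M : Matrix (Fin n) (Fin n) ℤ)
      (d₁ : Fin n₂ → ℤ)
      (G₂ : Matrix (Fin (n - n₂)) (Fin (n - n₂)) ℤ)
      (e : Fin n ≃ (Fin n₂ ⊕ Fin (n - n₂))),
      Odd M.det ∧ (∀ i, Odd (d₁ i)) ∧ G₂.IsSymm ∧
        Mᵀ * G * M =
          (Matrix.fromBlocks (Matrix.diagonal d₁) 0 0 ((2 : ℤ) • G₂)).submatrix e e := by
  obtain ⟨M, hM, p, hp⟩ := hasOddSplitting_of_isSymm hG (.inl hodd)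
  obtain ⟨n₂, hn₂, d₁, G₂, e, hd₁, hG₂, hsplit⟩ :=
    hp.exists_eq_submatrix_fromBlocks (hG.transpose_mul_mul M)
  exact ⟨n₂, hn₂, M, d₁, G₂, e, hM, hd₁, hG₂, hsplit⟩

/-- If a nondegenerate integral lattice is odd (some diagonal entry of
its Gram matrix `G` is odd), then it contains a sublattice of odd index with Gram
matrix the block diagonal sum of a diagonal matrix `G₁` with odd diagonal entries
and twice a symmetric integer matrix `G₂`. -/
theorem exists_odd_index_sublattice_splitting_of_odd_lattice
    {n : ℕ} (G : Matrix (Fin n) (Fin n) ℤ) (hG : G.IsSymm) (hdet : G.det ≠ 0)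
    (hodd : ∃ i, Odd (G i i)) :
    ∃ (n₂ : ℕ) (_ : n₂ ≤ n) (M : Matrix (Fin n) (Fin n) ℤ)
      (d₁ : Fin n₂ → ℤ)
      (G₂ : Matrix (Fin (n - n₂)) (Fin (n - n₂)) ℤ)
      (e : Fin n ≃ (Fin n₂ ⊕ Fin (n - n₂))),
      Odd M.det ∧ (∀ i, Odd (d₁ i)) ∧ G₂.IsSymm ∧
        Mᵀ * G * M =
          (Matrix.fromBlocks (Matrix.diagonal d₁) 0 0 ((2 : ℤ) • G₂)).submatrix e e :=
  exists_odd_index_sublattice_splitting_of_odd_lattice_general G hG hodd
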